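/- Let G be the Klein four-group with nonidentity elements a, b, c, k an algebraically closed field of characteristic 2, and U = kG/(a−1) the quotient of the regular module by the ideal generated by a−1. Let ℓ be the automorphism of G cyclically permuting a, b, c. Then the kG-module U ⊗_k ^ℓU is projective, but U ⊗_k U is not projective. -/

import Mathlib

open TensorProduct

/-- The Klein four-group. -/
abbrev KleinFour : Type := Multiplicative (ZMod 2) × Multiplicative (ZMod 2)

/-- The module `U = kG/(a−1)`: quotient of the left regular module by the ideal gen. by `a−1`. -/
abbrev Umod (k : Type) [Field k] (a : KleinFour) : Type :=
  (MonoidAlgebra k KleinFour) ⧸ Ideal.span {MonoidAlgebra.of k KleinFour a - 1}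

/-- `U` as a representation of the Klein four-group (on a scalar-restricted type synonym). -/
noncomputable def rhoU (k : Type) [Field k] (a : KleinFour) :
    Representation k KleinFour
      (RestrictScalars k (MonoidAlgebra k KleinFour) (Umod k a)) :=
  Representation.ofModule (Umod k a)

/-- The twist `^σV` of a representation: the same space with action `g · m := σ⁻¹(g) m`. -/
def twist {k V : Type} [Field k] [AddCommGroup V] [Module k V]
    (σ : KleinFour ≃* KleinFour) (ρ : Representation k KleinFour V) :
    Representation k KleinFour V :=
  ρ.comp σ.symm.toMonoidHom

/-- Port helper: the `k`-module structure `RestrictScalars.module` on `RestrictScalars k kG U`,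
stated over the additive monoid underlying its additive group (as `twist` requires). -/
noncomputable instance moduleRestrictScalarsUmod (k : Type) [Field k] (a : KleinFour) :
    @Module k (RestrictScalars k (MonoidAlgebra k KleinFour) (Umod k a)) _
      AddCommGroup.toAddCommMonoid :=
  (RestrictScalars.module k (MonoidAlgebra k KleinFour) (Umod k a) :)

/-!
`U = kG/(a-1)` is two-dimensional, spanned by the classes of `1` and of any `b ∉ {1, a}`, and
`g` acts on the class of `1` by sending it to the class of `g`, which only depends on the coset
`g⟨a⟩`. In `U ⊗ ^ℓU` the element `g` therefore sends `[1] ⊗ [1]` to `[g] ⊗ [ℓ⁻¹ g]`, which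
depends on the pair of cosets `(g⟨a⟩, g⟨ℓ a⟩)`. Since `⟨a⟩` and `⟨ℓ a⟩` are different subgroups
of order two, these four vectors span the four-dimensional space `U ⊗ ^ℓU`, so
`r ↦ r • ([1] ⊗ [1])` is an isomorphism `kG ≅ U ⊗ ^ℓU`.

On `U ⊗ U`, in contrast, `a` acts trivially, so `a - 1` kills it. In characteristic two the
annihilator of `a - 1` in `kG` is the ideal `(a - 1)`, and a projective module killed by such an
element vanishes (its coordinates in a free module are multiples of `a - 1`), whereas
`U ⊗ U ≠ 0`.
-/

open MonoidAlgebra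

theorem Representation.free_asModule_of_span_orbit {k G V : Type*} [Field k] [Group G]
    [Fintype G] [AddCommMonoid V] [Module k V] (ρ : Representation k G V) (v : V)
    (hspan : Submodule.span k (Set.range fun g => ρ g v) = ⊤)
    (hdim : Module.finrank k V = Fintype.card G) : Module.Free k[G] ρ.asModule := by
  let := Module.addCommMonoidToAddCommGroup k (M := V)
  have : FiniteDimensional k V := Module.finite_of_finrank_pos (hdim ▸ Fintype.card_pos)
  let φ := LinearMap.toSpanSingleton k[G] ρ.asModule (ρ.asModuleEquiv.symm v)
  have hsurj : Function.Surjective (φ.restrictScalars k) := by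
    rw [← LinearMap.range_eq_top, eq_top_iff]
    refine hspan.ge.trans (Submodule.span_le.2 ?_)
    rintro _ ⟨g, rfl⟩
    exact ⟨single g 1, by simp [φ]; rfl⟩
  have hinj : Function.Injective (φ.restrictScalars k) :=
    (LinearMap.injective_iff_surjective_of_finrank_eq_finrank (by
      rw [Module.finrank_eq_card_basis (MonoidAlgebra.basis G k), ← hdim]
      exact ρ.asModuleEquiv.finrank_eq.symm)).2 hsurj
  exact Module.Free.of_equiv (LinearEquiv.ofBijective φ ⟨hinj, hsurj⟩)

theorem Representation.of_sub_one_smul_eq_zero {k G V : Type*} [CommRing k] [Group G]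
    [AddCommMonoid V] [Module k V] (ρ : Representation k G V) {g : G} (hg : ρ g = 1)
    (m : ρ.asModule) : (of k G g - 1) • m = 0 := by
  let := Module.addCommMonoidToAddCommGroup k[G] (M := ρ.asModule)
  rw [sub_smul, one_smul, sub_eq_zero, ← ρ.asModuleEquiv.symm_apply_apply m,
    ← asModuleEquiv_symm_map_rho, hg]
  rfl

theorem Module.Projective.subsingleton_of_smul_eq_zero {R M : Type*} [CommRing R]
    [AddCommMonoid M] [Module R M] [Module.Projective R M] {e : R}
    (hann : ∀ r : R, e * r = 0 → e ∣ r) (he : ∀ m : M, e • m = 0) : Subsingleton M := by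
  obtain ⟨s, hs⟩ := Module.projective_def'.1 ‹Module.Projective R M›
  suffices ∀ m : M, m = 0 from ⟨fun m m' => (this m).trans (this m').symm⟩
  intro m
  have hcoeff (i : M) : e ∣ s m i :=
    hann _ (by simpa [he] using congr($(s.map_smul e m) i).symm)
  have hm : Finsupp.linearCombination R id (s m) = m := LinearMap.congr_fun hs m
  rw [← hm, Finsupp.linearCombination_apply]
  refine Finset.sum_eq_zero fun i _ => ?_
  obtain ⟨t, ht⟩ := hcoeff i
  simp only [ht, id_eq, mul_comm e, mul_smul, he, smul_zero]

theorem MonoidAlgebra.coeff_add_coeff_mul_eq_zero_of_mem_span {k G : Type*} [CommRing k]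
    [CommGroup G] {a : G} (ha : a * a = 1) {x : k[G]} (hx : x ∈ Ideal.span {of k G a - 1})
    (g : G) : x.coeff g + x.coeff (g * a) = 0 := by
  obtain ⟨r, rfl⟩ := Ideal.mem_span_singleton'.1 hx
  have ha' : a⁻¹ = a := inv_eq_of_mul_eq_one_right ha
  simp [mul_sub, coeff_sub, of_apply, ha', mul_assoc, ha]

namespace KleinFour

theorem mul_self : ∀ g : KleinFour, g * g = 1 := by decide

theorem card_eq_four : Fintype.card KleinFour = 4 := rfl

theorem exists_ne_one_ne : ∀ a : KleinFour, ∃ b : KleinFour, b ≠ 1 ∧ b ≠ a := by decide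

set_option synthInstance.maxSize 256 in
theorem eq_one_or_eq_or_eq_or_eq_mul : ∀ a b g : KleinFour, a ≠ 1 → b ≠ 1 → a ≠ b →
    g = 1 ∨ g = a ∨ g = b ∨ g = b * a := by decide

/- The cosets `g⟨a⟩` and `h⟨b⟩` of two different subgroups of order two always meet. -/
set_option synthInstance.maxSize 256 in
theorem exists_mem_cosets : ∀ a b g h : KleinFour, a ≠ 1 → b ≠ 1 → a ≠ b →
    ∃ x, (x = g ∨ x = g * a) ∧ (x = h ∨ x = h * b) := by decide

theorem of_sub_one_dvd_of_mul_eq_zero {k : Type*} [CommRing k] [CharP k 2] {a : KleinFour}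
    (ha : a ≠ 1) {r : k[KleinFour]} (hr : (of k KleinFour a - 1) * r = 0) :
    of k KleinFour a - 1 ∣ r := by
  obtain ⟨b, hb, hba⟩ := exists_ne_one_ne a
  have ha' : a⁻¹ = a := inv_eq_of_mul_eq_one_right (mul_self a)
  have hab : a * b ≠ 1 := fun h => hba (by rw [eq_inv_of_mul_eq_one_right h, ha'])
  have hmul (x : k[KleinFour]) (g : KleinFour) :
      ((of k KleinFour a - 1) * x).coeff g = x.coeff (a * g) + x.coeff g := by
    simp [sub_mul, coeff_sub, of_apply, ha', CharTwo.sub_eq_add]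
  have hr' (g : KleinFour) : r.coeff (a * g) = r.coeff g :=
    CharTwo.add_eq_zero.1 ((hmul r g).symm.trans (by rw [hr]; rfl))
  have hra : r.coeff a = r.coeff 1 := by simpa using hr' 1
  -- `r` is constant on the cosets `{1, a}` and `{b, b * a}`, so in characteristic two it is
  -- `a - 1` times its part supported on `{1, b}`
  refine ⟨single 1 (r.coeff 1) + single b (r.coeff b), ?_⟩
  ext g
  rw [hmul]
  rcases eq_one_or_eq_or_eq_or_eq_mul a b g ha hb hba.symm with h | h | h | h <;> rw [h] <;>
    simp [mul_self, ← mul_assoc, ha, hb, hba, hr', mul_comm b, hab.symm, hra]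

end KleinFour

namespace Umod

variable (k : Type) [Field k] (a : KleinFour)

noncomputable def mkₗ :
    k[KleinFour] →ₗ[k] RestrictScalars k k[KleinFour] (Umod k a) where
  toFun x := (RestrictScalars.addEquiv k _ _).symm (Ideal.Quotient.mk _ x)
  map_add' _ _ := by simp
  map_smul' c x := by
    rw [Algebra.smul_def, map_mul, ← smul_eq_mul, RingHom.id_apply,
      ← RestrictScalars.addEquiv_symm_map_algebraMap_smul]
    rfl

noncomputable def coset (g : KleinFour) :
    RestrictScalars k k[KleinFour] (Umod k a) :=
  mkₗ k a (of k KleinFour g)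

variable {k a}

theorem mkₗ_surjective : Function.Surjective (mkₗ k a) :=
  (RestrictScalars.addEquiv k _ _).symm.surjective.comp Ideal.Quotient.mk_surjective

theorem mkₗ_eq_zero_iff {x : k[KleinFour]} :
    mkₗ k a x = 0 ↔ x ∈ Ideal.span {of k KleinFour a - 1} := by
  rw [mkₗ, LinearMap.coe_mk, AddHom.coe_mk, AddEquivClass.map_eq_zero_iff,
    Ideal.Quotient.eq_zero_iff_mem]

theorem rhoU_mkₗ (g : KleinFour) (x : k[KleinFour]) :
    rhoU k a g (mkₗ k a x) = mkₗ k a (of k KleinFour g * x) := by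
  rw [rhoU, ← Representation.asAlgebraHom_of, Representation.ofModule_asAlgebraHom_apply_apply]
  rfl

theorem rhoU_self : rhoU k a a = 1 := by
  ext v
  obtain ⟨x, rfl⟩ := mkₗ_surjective (k := k) (a := a) v
  rw [rhoU_mkₗ, Module.End.one_apply, ← sub_eq_zero, ← map_sub, mkₗ_eq_zero_iff, ← sub_one_mul]
  exact Ideal.mul_mem_right _ _ (Ideal.mem_span_singleton_self _)

theorem rhoU_coset (g h : KleinFour) : rhoU k a g (coset k a h) = coset k a (g * h) := by
  rw [coset, rhoU_mkₗ, ← map_mul]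
  rfl

theorem coset_mul (g : KleinFour) : coset k a (g * a) = coset k a g := by
  rw [coset, coset, ← sub_eq_zero, ← map_sub, mkₗ_eq_zero_iff, map_mul, ← mul_sub_one]
  exact Ideal.mul_mem_left _ _ (Ideal.mem_span_singleton_self _)

theorem coset_eq_of_eq_or_eq_mul {g x : KleinFour} (hx : x = g ∨ x = g * a) :
    coset k a x = coset k a g := by
  rcases hx with rfl | rfl
  exacts [rfl, coset_mul g]

theorem span_range_coset : Submodule.span k (Set.range (coset k a)) = ⊤ := by
  have hrange : Set.range (coset k a) = mkₗ k a '' Set.range (MonoidAlgebra.basis KleinFour k) := by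
    rw [← Set.range_comp]
    rfl
  rw [hrange, Submodule.span_image, Module.Basis.span_eq, Submodule.map_top, LinearMap.range_eq_top]
  exact mkₗ_surjective

theorem linearIndependent_coset {b : KleinFour} (ha : a ≠ 1) (hb : b ≠ 1) (hba : b ≠ a) :
    LinearIndependent k ![coset k a 1, coset k a b] := by
  refine LinearIndependent.pair_iff.2 fun s t hst => ?_
  have hx : mkₗ k a (s • of k KleinFour 1 + t • of k KleinFour b) = 0 := by
    rw [map_add, map_smul, map_smul]
    exact hst
  rw [mkₗ_eq_zero_iff] at hx
  have hs : s = 0 := by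
    simpa [of_apply, ha, hb, hba] using
      coeff_add_coeff_mul_eq_zero_of_mem_span (KleinFour.mul_self a) hx 1
  have ht : t = 0 := by
    simpa [of_apply, hs, Finsupp.single_apply, ha] using
      coeff_add_coeff_mul_eq_zero_of_mem_span (KleinFour.mul_self a) hx b
  exact ⟨hs, ht⟩

theorem top_le_span_coset {b : KleinFour} (ha : a ≠ 1) (hb : b ≠ 1) (hba : b ≠ a) :
    ⊤ ≤ Submodule.span k (Set.range ![coset k a 1, coset k a b]) := by
  rw [← span_range_coset, Submodule.span_le]
  rintro _ ⟨g, rfl⟩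
  have hca : coset k a a = coset k a 1 := coset_eq_of_eq_or_eq_mul (.inr (one_mul a).symm)
  rcases KleinFour.eq_one_or_eq_or_eq_or_eq_mul a b g ha hb hba.symm with h | h | h | h <;>
    rw [h]
  · exact Submodule.subset_span ⟨0, rfl⟩
  · rw [hca]
    exact Submodule.subset_span ⟨0, rfl⟩
  · exact Submodule.subset_span ⟨1, rfl⟩
  · rw [coset_mul]
    exact Submodule.subset_span ⟨1, rfl⟩

noncomputable def cosetBasis {b : KleinFour} (ha : a ≠ 1) (hb : b ≠ 1) (hba : b ≠ a) :
    Module.Basis (Fin 2) k (RestrictScalars k k[KleinFour] (Umod k a)) :=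
  .mk (linearIndependent_coset ha hb hba) (top_le_span_coset ha hb hba)

theorem finrank_eq_two (ha : a ≠ 1) :
    Module.finrank k (RestrictScalars k k[KleinFour] (Umod k a)) = 2 := by
  obtain ⟨b, hb, hba⟩ := KleinFour.exists_ne_one_ne a
  rw [Module.finrank_eq_card_basis (cosetBasis (k := k) ha hb hba), Fintype.card_fin]

-- `Module.Free.of_divisionRing` is not found on its own: it needs an `AddCommGroup` instance.
instance : Module.Free k (RestrictScalars k k[KleinFour] (Umod k a)) :=
  .of_divisionRing k _

theorem finrank_tensorProduct_self (ha : a ≠ 1) :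
    Module.finrank k (RestrictScalars k k[KleinFour] (Umod k a) ⊗[k]
      RestrictScalars k k[KleinFour] (Umod k a)) = 4 := by
  rw [Module.finrank_tensorProduct, finrank_eq_two ha]

theorem free_tprod_comp (ha : a ≠ 1) (ℓ : KleinFour ≃* KleinFour) (hℓ : ℓ a ≠ a) :
    Module.Free k[KleinFour]
      ((rhoU k a).tprod ((rhoU k a).comp ℓ.symm.toMonoidHom)).asModule := by
  have hℓ1 : ℓ a ≠ 1 := (map_ne_one_iff ℓ ℓ.injective).2 ha
  have horbit (g : KleinFour) : ((rhoU k a).tprod ((rhoU k a).comp ℓ.symm.toMonoidHom)) g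
      (coset k a 1 ⊗ₜ[k] coset k a 1) = coset k a g ⊗ₜ[k] coset k a (ℓ.symm g) := by
    rw [Representation.tprod_apply, TensorProduct.map_tmul, MonoidHom.comp_apply, rhoU_coset,
      rhoU_coset, mul_one, mul_one]
    rfl
  refine Representation.free_asModule_of_span_orbit _ (coset k a 1 ⊗ₜ[k] coset k a 1) ?_
    ((finrank_tensorProduct_self ha).trans KleinFour.card_eq_four.symm)
  rw [eq_top_iff, ← TensorProduct.map₂_mk_top_top_eq_top, ← span_range_coset,
    Submodule.map₂_span_span, Submodule.span_le]
  rintro _ ⟨_, ⟨g, rfl⟩, _, ⟨h, rfl⟩, rfl⟩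
  obtain ⟨x, hxg, hxh⟩ := KleinFour.exists_mem_cosets a (ℓ a) g (ℓ h) ha hℓ1 hℓ.symm
  have hxh' : ℓ.symm x = h ∨ ℓ.symm x = h * a := by
    rcases hxh with rfl | rfl <;> simp
  refine Submodule.subset_span ⟨x, (horbit x).trans ?_⟩
  rw [coset_eq_of_eq_or_eq_mul hxg, coset_eq_of_eq_or_eq_mul hxh']
  rfl

theorem not_projective_tprod_self [CharP k 2] (ha : a ≠ 1) :
    ¬ Module.Projective k[KleinFour] ((rhoU k a).tprod (rhoU k a)).asModule := by
  intro hP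
  have hkill := Representation.of_sub_one_smul_eq_zero ((rhoU k a).tprod (rhoU k a))
    (by rw [Representation.tprod_apply, rhoU_self]; exact TensorProduct.map_one)
  have := hP.subsingleton_of_smul_eq_zero
    (fun _ hr => KleinFour.of_sub_one_dvd_of_mul_eq_zero ha hr) hkill
  have h4 : Module.finrank k ((rhoU k a).tprod (rhoU k a)).asModule = 4 :=
    finrank_tensorProduct_self ha
  rw [Module.finrank_zero_of_subsingleton] at h4
  exact absurd h4 (by norm_num)

end Umod

theorem stmt_6_general (k : Type) [Field k] [CharP k 2]
    (a b : KleinFour) (ha : a ≠ 1)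
    (hab : a ≠ b)
    (ℓ : KleinFour ≃* KleinFour) (hℓa : ℓ a = b) :
    Module.Projective (MonoidAlgebra k KleinFour)
      ((rhoU k a).tprod (@twist k _ _ _ (moduleRestrictScalarsUmod k a) ℓ (rhoU k a))).asModule ∧
    ¬ Module.Projective (MonoidAlgebra k KleinFour)
      ((rhoU k a).tprod (rhoU k a)).asModule :=
  ⟨@Module.Projective.of_free _ _ _ _ _ (Umod.free_tprod_comp ha ℓ (hℓa ▸ hab.symm)),
    Umod.not_projective_tprod_self ha⟩

/-- Let `G` be the Klein four-group with nonidentity elements `a, b, c`, `k` an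
algebraically closed field of characteristic 2, `U = kG/(a−1)`, and `ℓ` the automorphism of `G`
cyclically permuting `a, b, c`.  Then the `kG`-module `U ⊗_k ^ℓU` (diagonal `G`-action) is
projective, but `U ⊗_k U` is not projective. -/
theorem stmt_6 (k : Type) [Field k] [IsAlgClosed k] [CharP k 2]
    (a b c : KleinFour) (ha : a ≠ 1) (hb : b ≠ 1) (hc : c ≠ 1)
    (hab : a ≠ b) (hac : a ≠ c) (hbc : b ≠ c)
    (ℓ : KleinFour ≃* KleinFour) (hℓa : ℓ a = b) (hℓb : ℓ b = c) (hℓc : ℓ c = a) :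
    Module.Projective (MonoidAlgebra k KleinFour)
      ((rhoU k a).tprod (@twist k _ _ _ (moduleRestrictScalarsUmod k a) ℓ (rhoU k a))).asModule ∧
    ¬ Module.Projective (MonoidAlgebra k KleinFour)
      ((rhoU k a).tprod (rhoU k a)).asModule :=
  stmt_6_general k a b ha hab ℓ hℓa
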